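/- arXiv:2303.17958 — 2 statements merged into one kernel-verified Lean document; each statement's English description precedes it below -/
import Mathlib

section
/- Suppose X_+ = A X_- + B U_- for matrices A ∈ ℝ^{n×n}, B ∈ ℝ^{n×m}, and G ∈ ℝ^{T×n} satisfies U_- G = K and X_- G = I_n. Then A + B K = X_+ G. -/
open Matrix

/-- Data-driven closed-loop parameterization: if `X₊ = A X₋ + B U₋`, `U₋ G = K`
and `X₋ G = 1`, then `A + B K = X₊ G`. -/
theorem closed_loop_parameterization (m n T : ℕ)
    (A : Matrix (Fin n) (Fin n) ℝ) (B : Matrix (Fin n) (Fin m) ℝ)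
    (U : Matrix (Fin m) (Fin T) ℝ) (X : Matrix (Fin n) (Fin T) ℝ)
    (Xp : Matrix (Fin n) (Fin T) ℝ) (G : Matrix (Fin T) (Fin n) ℝ)
    (K : Matrix (Fin m) (Fin n) ℝ)
    (hdyn : Xp = A * X + B * U) (hU : U * G = K) (hX : X * G = 1) :
    A + B * K = Xp * G := by
  subst hdyn; rw [Matrix.add_mul, Matrix.mul_assoc, Matrix.mul_assoc, hX, hU, Matrix.mul_one]
end

section
/- Let X_- ∈ ℝ^{n×T} have full row rank, and let D_- = [U_-; X_-] ∈ ℝ^{(m+n)×T}. Then for any matrix M ∈ ℝ^{(m+n)×(m+n)} the matrix (I_T - X_-ᵀ(X_- X_-ᵀ)^{-1}X_-) D_-ᵀ M lies in the row space of D_-; more precisely (I_T - X_-ᵀ(X_- X_-ᵀ)^{-1}X_-) D_-ᵀ = D_-ᵀ N for N = [[I_m, 0], [-(X_- X_-ᵀ)^{-1}X_- U_-ᵀ, 0]]. -/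
/-!
Full row rank makes `X Xᵀ` invertible, so `Π = I - Xᵀ(X Xᵀ)⁻¹X` kills `Xᵀ`. Hence
`Π Dᵀ = [Π Uᵀ, Π Xᵀ] = [Uᵀ - Xᵀ (X Xᵀ)⁻¹ X Uᵀ, 0]`, which is `[Uᵀ, Xᵀ] N` computed blockwise.
-/

open Matrix

namespace Matrix

variable {m n p K R : Type*} [Fintype m] [Fintype n]

theorem fromCols_mul_fromBlocks_one_zero [CommRing R] [DecidableEq m] (A : Matrix p m R)
    (B : Matrix p n R) (C : Matrix n m R) :
    fromCols A B * fromBlocks (1 : Matrix m m R) 0 C (0 : Matrix n n R) =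
      fromCols (A + B * C) (0 : Matrix p n R) := by
  rw [fromCols_mul_fromBlocks]
  simp

variable [DecidableEq n]

theorem isUnit_of_rank_eq_card [Field K] {A : Matrix n n K} (h : A.rank = Fintype.card n) :
    IsUnit A := by
  rw [← mulVec_injective_iff_isUnit, ← coe_mulVecLin, LinearMap.injective_iff_surjective,
    ← LinearMap.range_eq_top]
  apply Submodule.eq_top_of_finrank_eq
  rw [← rank, h, Module.finrank_fintype_fun_eq_card]

theorem isUnit_mul_transpose_of_rank_eq_card [Field K] [LinearOrder K] [IsStrictOrderedRing K]
    {X : Matrix n m K} (h : X.rank = Fintype.card n) : IsUnit (X * Xᵀ) :=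
  isUnit_of_rank_eq_card (by rw [rank_self_mul_transpose, h])

variable [CommRing R] [DecidableEq m]

theorem one_sub_mul_inv_mul_mul_eq_zero {X : Matrix n m R} {Y : Matrix m n R}
    (h : IsUnit (X * Y)) : (1 - Y * (X * Y)⁻¹ * X) * Y = 0 := by
  rw [Matrix.sub_mul, Matrix.one_mul, Matrix.mul_assoc, Matrix.mul_assoc,
    nonsing_inv_mul _ ((isUnit_iff_isUnit_det _).mp h), Matrix.mul_one, sub_self]

end Matrix

/-- Key identity underlying implicit regularization: with `D₋ = [U₋; X₋]` and
`Π_{X₋} = I - X₋ᵀ(X₋X₋ᵀ)⁻¹X₋`, we have `Π_{X₋} D₋ᵀ = D₋ᵀ N` for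
`N = [[I, 0], [-(X₋X₋ᵀ)⁻¹ X₋ U₋ᵀ, 0]]`; in particular `Π_{X₋} D₋ᵀ M` lies in
the range of `D₋ᵀ` for every `M`. -/
theorem projected_gradient_in_range (m n T : ℕ)
    (U : Matrix (Fin m) (Fin T) ℝ) (X : Matrix (Fin n) (Fin T) ℝ)
    (hrank : X.rank = n)
    (D : Matrix (Fin m ⊕ Fin n) (Fin T) ℝ) (hD : D = Matrix.fromRows U X)
    (N : Matrix (Fin m ⊕ Fin n) (Fin m ⊕ Fin n) ℝ)
    (hN : N = Matrix.fromBlocks 1 0 (-((X * Xᵀ)⁻¹ * X * Uᵀ)) 0) :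
    (1 - Xᵀ * (X * Xᵀ)⁻¹ * X) * Dᵀ = Dᵀ * N ∧
      ∀ M : Matrix (Fin m ⊕ Fin n) (Fin m ⊕ Fin n) ℝ,
        ∃ N' : Matrix (Fin m ⊕ Fin n) (Fin m ⊕ Fin n) ℝ,
          (1 - Xᵀ * (X * Xᵀ)⁻¹ * X) * Dᵀ * M = Dᵀ * N' := by
  have hXXt : IsUnit (X * Xᵀ) :=
    isUnit_mul_transpose_of_rank_eq_card (by rw [hrank, Fintype.card_fin])
  have key : (1 - Xᵀ * (X * Xᵀ)⁻¹ * X) * Dᵀ = Dᵀ * N := by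
    rw [hD, hN, transpose_fromRows, mul_fromCols, fromCols_mul_fromBlocks_one_zero,
      one_sub_mul_inv_mul_mul_eq_zero hXXt, Matrix.sub_mul, Matrix.one_mul, Matrix.mul_neg,
      ← sub_eq_add_neg, Matrix.mul_assoc, Matrix.mul_assoc, Matrix.mul_assoc]
  exact ⟨key, fun M => ⟨N * M, by rw [key, Matrix.mul_assoc]⟩⟩
end
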